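/- arXiv:2012.15457 — 2 statements merged into one kernel-verified Lean document; each statement's English description precedes it below -/
import Mathlib

section
/- Let (X,d) be a compact metric space, f_0,...,f_{m-1} continuous self-maps, φ continuous on X with M = max_{x∈X}|φ(x)|, ε>0, 0<r<1/2, and δ = sup{|φ(x)−φ(y)| : d(x,y) ≤ ε}. Then for every n ≥ 1, Q_n^s(f_0,...,f_{m-1},φ,2ε,2r) ≤ e^{nδ + 2nrM} · Q_n(f_0,...,f_{m-1},φ,ε,r). -/
open Filter Topology

section FSG

variable {X : Type*}

/-- Apply the maps of the free semigroup action along a word; the first letter of the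
list is applied first. -/
def fw {ι : Type*} (f : ι → X → X) (w : List ι) (x : X) : X :=
  w.foldl (fun y a => f a y) x

/-- The Birkhoff-type sum `(S_w φ)(x) = ∑_{w' ≤ w} φ(f_{w'} x)`. -/
noncomputable def Sw {ι : Type*} (f : ι → X → X) (φ : X → ℝ) (w : List ι) (x : X) : ℝ :=
  ∑ i ∈ Finset.range w.length, φ (fw f (w.take i) x)

variable [MetricSpace X]

/-- `F` is a `(w, ε, r)`-spanning set for the free semigroup action. -/
def rSpan {ι : Type*} (f : ι → X → X) (w : List ι) (ε r : ℝ) (F : Finset X) : Prop :=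
  ∀ x : X, ∃ y ∈ F, (1 - r) * w.length <
    (((Finset.range w.length).filter
      (fun i => dist (fw f (w.take i) x) (fw f (w.take i) y) < ε)).card : ℝ)

/-- `E` is a `(w, ε, r)`-separated set for the free semigroup action. -/
def rSep {ι : Type*} (f : ι → X → X) (w : List ι) (ε r : ℝ) (E : Finset X) : Prop :=
  ∀ x ∈ E, ∀ y ∈ E, x ≠ y → r * w.length <
    (((Finset.range w.length).filter
      (fun i => ε ≤ dist (fw f (w.take i) x) (fw f (w.take i) y))).card : ℝ)

/-- `Q_w(f_0,…,f_{m-1},φ,ε,r)` (spanning-set version). -/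
noncomputable def Qw {ι : Type*} (f : ι → X → X) (φ : X → ℝ) (w : List ι) (ε r : ℝ) : ℝ :=
  sInf {s : ℝ | ∃ F : Finset X, rSpan f w ε r F ∧ s = ∑ x ∈ F, Real.exp (Sw f φ w x)}

/-- `Q_w^s(f_0,…,f_{m-1},φ,ε,r)` (separated-set version). -/
noncomputable def Qws {ι : Type*} (f : ι → X → X) (φ : X → ℝ) (w : List ι) (ε r : ℝ) : ℝ :=
  sSup {s : ℝ | ∃ E : Finset X, rSep f w ε r E ∧ s = ∑ x ∈ E, Real.exp (Sw f φ w x)}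

/-- `Q_n(f_0,…,f_{m-1},φ,ε,r) = (1/m^n) ∑_{|w|=n} Q_w`. -/
noncomputable def Qn {ι : Type*} [Fintype ι] (f : ι → X → X) (φ : X → ℝ)
    (n : ℕ) (ε r : ℝ) : ℝ :=
  (1 / (Fintype.card ι : ℝ) ^ n) * ∑ σ : Fin n → ι, Qw f φ (List.ofFn σ) ε r

/-- `Q_n^s(f_0,…,f_{m-1},φ,ε,r) = (1/m^n) ∑_{|w|=n} Q_w^s`. -/
noncomputable def Qns {ι : Type*} [Fintype ι] (f : ι → X → X) (φ : X → ℝ)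
    (n : ℕ) (ε r : ℝ) : ℝ :=
  (1 / (Fintype.card ι : ℝ) ^ n) * ∑ σ : Fin n → ι, Qws f φ (List.ofFn σ) ε r

/-- The topological `r`-pressure of the free semigroup action (spanning sets);
the limit as `ε → 0` is realised as a supremum over `ε > 0`, the quantity being
monotone in `ε`. -/
noncomputable def Pr {ι : Type*} [Fintype ι] (f : ι → X → X) (φ : X → ℝ) (r : ℝ) : EReal :=
  ⨆ ε ∈ Set.Ioi (0 : ℝ), atTop.limsup fun n : ℕ =>
    (((n : ℝ)⁻¹ * Real.log (Qn f φ n ε r) : ℝ) : EReal)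

/-- `P^s_r(f_0,…,f_{m-1},φ,ε)`, the fixed-`ε` separated-set `r`-pressure. -/
noncomputable def Pse {ι : Type*} [Fintype ι] (f : ι → X → X) (φ : X → ℝ) (ε r : ℝ) : EReal :=
  atTop.limsup fun n : ℕ => (((n : ℝ)⁻¹ * Real.log (Qns f φ n ε r) : ℝ) : EReal)

/-- The topological `r`-pressure of the free semigroup action (separated sets). -/
noncomputable def Ps {ι : Type*} [Fintype ι] (f : ι → X → X) (φ : X → ℝ) (r : ℝ) : EReal :=
  ⨆ ε ∈ Set.Ioi (0 : ℝ), Pse f φ ε r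

/-- Liminf variant of the separated-set topological `r`-pressure. -/
noncomputable def PsInf {ι : Type*} [Fintype ι] (f : ι → X → X) (φ : X → ℝ) (r : ℝ) : EReal :=
  ⨆ ε ∈ Set.Ioi (0 : ℝ), atTop.liminf fun n : ℕ =>
    (((n : ℝ)⁻¹ * Real.log (Qns f φ n ε r) : ℝ) : EReal)

/-- `F` is a `(w, ε)`-spanning set for the Bowen metric `d_w` of the free semigroup action. -/
def span0 {ι : Type*} (f : ι → X → X) (w : List ι) (ε : ℝ) (F : Finset X) : Prop :=
  ∀ x : X, ∃ y ∈ F, ∀ i < w.length,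
    dist (fw f (w.take i) x) (fw f (w.take i) y) ≤ ε

/-- `E` is a `(w, ε)`-separated set for the Bowen metric `d_w`. -/
def sep0 {ι : Type*} (f : ι → X → X) (w : List ι) (ε : ℝ) (E : Finset X) : Prop :=
  ∀ x ∈ E, ∀ y ∈ E, x ≠ y → ∃ i < w.length,
    ε < dist (fw f (w.take i) x) (fw f (w.take i) y)

noncomputable def Qw0 {ι : Type*} (f : ι → X → X) (φ : X → ℝ) (w : List ι) (ε : ℝ) : ℝ :=
  sInf {s : ℝ | ∃ F : Finset X, span0 f w ε F ∧ s = ∑ x ∈ F, Real.exp (Sw f φ w x)}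

noncomputable def Qws0 {ι : Type*} (f : ι → X → X) (φ : X → ℝ) (w : List ι) (ε : ℝ) : ℝ :=
  sSup {s : ℝ | ∃ E : Finset X, sep0 f w ε E ∧ s = ∑ x ∈ E, Real.exp (Sw f φ w x)}

noncomputable def Qn0 {ι : Type*} [Fintype ι] (f : ι → X → X) (φ : X → ℝ) (n : ℕ) (ε : ℝ) : ℝ :=
  (1 / (Fintype.card ι : ℝ) ^ n) * ∑ σ : Fin n → ι, Qw0 f φ (List.ofFn σ) ε

noncomputable def Qns0 {ι : Type*} [Fintype ι] (f : ι → X → X) (φ : X → ℝ) (n : ℕ) (ε : ℝ) : ℝ :=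
  (1 / (Fintype.card ι : ℝ) ^ n) * ∑ σ : Fin n → ι, Qws0 f φ (List.ofFn σ) ε

/-- The topological pressure of the free semigroup action. -/
noncomputable def P0 {ι : Type*} [Fintype ι] (f : ι → X → X) (φ : X → ℝ) : EReal :=
  ⨆ ε ∈ Set.Ioi (0 : ℝ), atTop.limsup fun n : ℕ =>
    (((n : ℝ)⁻¹ * Real.log (Qn0 f φ n ε) : ℝ) : EReal)

/-- `r_w(ε,r)`: the smallest cardinality of a `(w,ε,r)`-spanning set. -/
noncomputable def rSpanCard {ι : Type*} (f : ι → X → X) (w : List ι) (ε r : ℝ) : ℕ :=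
  sInf {k : ℕ | ∃ F : Finset X, rSpan f w ε r F ∧ F.card = k}

/-- The topological `r`-entropy of the free semigroup action. -/
noncomputable def hrEnt {ι : Type*} [Fintype ι] (f : ι → X → X) (r : ℝ) : EReal :=
  ⨆ ε ∈ Set.Ioi (0 : ℝ), atTop.limsup fun n : ℕ =>
    (((n : ℝ)⁻¹ * Real.log ((1 / (Fintype.card ι : ℝ) ^ n) *
      ∑ σ : Fin n → ι, (rSpanCard f (List.ofFn σ) ε r : ℝ)) : ℝ) : EReal)

end FSG


/-! Fix a word `w` of length `n`. Map each point `x` of a `(w, 2ε, 2r)`-separated set `E` to a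
point `g x` of a `(w, ε, r)`-spanning set `F` whose orbit is `ε`-close to that of `x` at more than
`(1 - r) n` times. If `g x = g x'`, the orbits of `x` and `x'` are `2ε`-close at more than
`(1 - 2r) n` common times, so they are `2ε`-apart at fewer than `2rn` times; hence `g` is
injective on `E`. At the close times `φ` moves by at most `δ`, at the fewer than `rn` others by at
most `2M`, so `S_w φ x ≤ S_w φ (g x) + nδ + 2nrM`. Summing `exp S_w φ` over `E` gives
`Q_w^s(2ε, 2r) ≤ e^{nδ + 2nrM} Q_w(ε, r)`, and averaging over the words of length `n` gives the
theorem. -/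

open Finset

theorem Finset.sum_le_card_filter_mul_add_card_filter_not_mul {ι R : Type*} [Semiring R]
    [PartialOrder R] [IsOrderedAddMonoid R] (s : Finset ι) (p : ι → Prop) [DecidablePred p]
    {u : ι → R} {a b : R}
    (ha : ∀ i ∈ s, p i → u i ≤ a) (hb : ∀ i ∈ s, ¬p i → u i ≤ b) :
    ∑ i ∈ s, u i ≤ #(s.filter p) * a + #(s.filter (¬p ·)) * b := by
  rw [← sum_filter_add_sum_filter_not s p, ← nsmul_eq_mul, ← nsmul_eq_mul]
  gcongr
  · exact sum_le_card_nsmul _ _ _ fun i hi =>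
      ha i (mem_filter.1 hi).1 (mem_filter.1 hi).2
  · exact sum_le_card_nsmul _ _ _ fun i hi =>
      hb i (mem_filter.1 hi).1 (mem_filter.1 hi).2

theorem Finset.card_add_card_add_card_le_two_mul {α : Type*} [DecidableEq α]
    {s A A' B : Finset α} (hA : A ⊆ s) (hA' : A' ⊆ s) (hB : B ⊆ s)
    (hdisj : Disjoint (A ∩ A') B) :
    #A + #A' + #B ≤ 2 * #s := by
  have hunion : #(A ∪ A') ≤ #s := card_le_card (union_subset hA hA')
  have hinter : #(A ∩ A') + #B ≤ #s := by
    rw [← card_union_of_disjoint hdisj]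
    exact card_le_card (union_subset (inter_subset_left.trans hA) hB)
  have := card_inter_add_card_union A A'
  omega

theorem Real.sSup_le_mul_sInf {S T : Set ℝ} {c : ℝ} (hc : 0 < c) (hT : T.Nonempty)
    (hT0 : ∀ t ∈ T, 0 ≤ t) (h : ∀ s ∈ S, ∀ t ∈ T, s ≤ c * t) :
    sSup S ≤ c * sInf T := by
  refine Real.sSup_le (fun s hs => ?_) (mul_nonneg hc.le (Real.sInf_nonneg hT0))
  rw [← div_le_iff₀' hc]
  exact le_csInf hT fun t ht => (div_le_iff₀' hc).2 (h s hs t ht)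

theorem abs_sub_le_sSup_of_dist_le {X : Type*} [PseudoMetricSpace X] {φ : X → ℝ} {M ε : ℝ}
    (hφM : ∀ x, |φ x| ≤ M) {x y : X} (hxy : dist x y ≤ ε) :
    |φ x - φ y| ≤ sSup {t : ℝ | ∃ x y : X, dist x y ≤ ε ∧ t = |φ x - φ y|} :=
  le_csSup ⟨2 * M, by rintro _ ⟨a, b, -, rfl⟩; linarith [abs_sub (φ a) (φ b), hφM a, hφM b]⟩
    ⟨x, y, hxy, rfl⟩

theorem exists_finset_forall_dist_lt {X Y : Type*} [TopologicalSpace X] [CompactSpace X]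
    [PseudoMetricSpace Y] (g : ℕ → X → Y) (hg : ∀ i, Continuous (g i)) (n : ℕ) {ε : ℝ}
    (hε : 0 < ε) :
    ∃ F : Finset X, ∀ x, ∃ y ∈ F, ∀ i < n, dist (g i x) (g i y) < ε := by
  let U : X → Set X := fun y => ⋂ i ∈ range n, g i ⁻¹' Metric.ball (g i y) ε
  have hU : ∀ y, IsOpen (U y) := fun y =>
    isOpen_biInter_finset fun i _ => Metric.isOpen_ball.preimage (hg i)
  obtain ⟨F, hF⟩ := isCompact_univ.elim_finite_subcover U hU
    fun x _ => Set.mem_iUnion.2 ⟨x, by simp [U, hε]⟩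
  refine ⟨F, fun x => ?_⟩
  obtain ⟨y, hy, hxy⟩ := Set.mem_iUnion₂.1 (hF (Set.mem_univ x))
  exact ⟨y, hy, fun i hi => by simpa [U] using Set.mem_iInter₂.1 hxy i (mem_range.2 hi)⟩

theorem continuous_fw {X ι : Type*} [TopologicalSpace X] {f : ι → X → X}
    (hf : ∀ i, Continuous (f i)) (w : List ι) : Continuous (fw f w) := by
  induction w with
  | nil => exact continuous_id
  | cons a w ih =>
    have : fw f (a :: w) = fw f w ∘ f a := rfl
    exact this ▸ ih.comp (hf a)

section FreeSemigroupAction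

variable {X ι : Type*} [MetricSpace X] {f : ι → X → X} {w : List ι}

theorem exists_rSpan [CompactSpace X] (hf : ∀ i, Continuous (f i)) (hw : w ≠ [])
    {ε r : ℝ} (hε : 0 < ε) (hr : 0 < r) : ∃ F : Finset X, rSpan f w ε r F := by
  obtain ⟨F, hF⟩ := exists_finset_forall_dist_lt (fun i => fw f (w.take i))
    (fun i => continuous_fw hf _) w.length hε
  refine ⟨F, fun x => ?_⟩
  obtain ⟨y, hy, hxy⟩ := hF x
  refine ⟨y, hy, ?_⟩
  rw [filter_true_of_mem fun i hi => hxy i (mem_range.1 hi), card_range]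
  have : (0 : ℝ) < w.length := by exact_mod_cast List.length_pos_iff.2 hw
  linarith [mul_pos hr this]

theorem eq_of_rSep_of_card_dist_lt {ε r : ℝ} {E : Finset X} (hE : rSep f w (2 * ε) (2 * r) E)
    {x x' y : X} (hx : x ∈ E) (hx' : x' ∈ E)
    (hxy : (1 - r) * w.length < #((range w.length).filter
      fun i => dist (fw f (w.take i) x) (fw f (w.take i) y) < ε))
    (hx'y : (1 - r) * w.length < #((range w.length).filter
      fun i => dist (fw f (w.take i) x') (fw f (w.take i) y) < ε)) :
    x = x' := by
  by_contra hne
  have hsep := hE x hx x' hx' hne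
  have hdisj : Disjoint
      (((range w.length).filter
        fun i => dist (fw f (w.take i) x) (fw f (w.take i) y) < ε) ∩
      (range w.length).filter
        fun i => dist (fw f (w.take i) x') (fw f (w.take i) y) < ε)
      ((range w.length).filter
        fun i => 2 * ε ≤ dist (fw f (w.take i) x) (fw f (w.take i) x')) := by
    refine disjoint_left.2 fun i hi hi' => ?_
    simp only [mem_inter, mem_filter] at hi hi'
    have := dist_triangle_right (fw f (w.take i) x) (fw f (w.take i) x') (fw f (w.take i) y)
    linarith [hi.1.2, hi.2.2, hi'.2]
  have hcard := card_add_card_add_card_le_two_mul (filter_subset _ _)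
    (filter_subset _ _) (filter_subset _ _) hdisj
  rw [card_range] at hcard
  have := (Nat.cast_le (α := ℝ)).2 hcard
  push_cast at this
  linarith

variable {φ : X → ℝ} {ε r M δ : ℝ}

theorem Sw_le_Sw_add (hε : 0 ≤ ε) (hφM : ∀ x, |φ x| ≤ M)
    (hφδ : ∀ x y, dist x y ≤ ε → |φ x - φ y| ≤ δ) {x y : X}
    (hxy : (1 - r) * w.length < #((range w.length).filter
      fun i => dist (fw f (w.take i) x) (fw f (w.take i) y) < ε)) :
    Sw f φ w x ≤ Sw f φ w y + (w.length * δ + 2 * w.length * r * M) := by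
  set p := fun i => dist (fw f (w.take i) x) (fw f (w.take i) y) < ε
  have hM : 0 ≤ M := (abs_nonneg _).trans (hφM x)
  have hδ : 0 ≤ δ := (abs_nonneg _).trans (hφδ x x (by simpa using hε))
  have hdiff : Sw f φ w x - Sw f φ w y ≤
      #((range w.length).filter p) * δ + #((range w.length).filter (¬p ·)) * (2 * M) := by
    rw [Sw, Sw, ← sum_sub_distrib]
    refine sum_le_card_filter_mul_add_card_filter_not_mul _ _
      (fun i _ hi => (le_abs_self _).trans (hφδ _ _ hi.le)) fun i _ _ => ?_
    linarith [le_abs_self (φ (fw f (w.take i) x) - φ (fw f (w.take i) y)),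
      abs_sub (φ (fw f (w.take i) x)) (φ (fw f (w.take i) y)), hφM (fw f (w.take i) x),
      hφM (fw f (w.take i) y)]
  have hsplit : (#((range w.length).filter p) : ℝ) + #((range w.length).filter (¬p ·)) =
      w.length := by
    exact_mod_cast (card_filter_add_card_filter_not (s := range w.length) p).trans (card_range _)
  have hA : (#((range w.length).filter p) : ℝ) ≤ w.length := by
    exact_mod_cast (card_filter_le _ _).trans (card_range _).le
  have hAc : (#((range w.length).filter (¬p ·)) : ℝ) ≤ r * w.length := by linarith
  linarith [mul_le_mul_of_nonneg_right hA hδ, mul_le_mul_of_nonneg_right hAc hM]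

theorem sum_exp_Sw_le_of_rSep_of_rSpan (hε : 0 ≤ ε) (hφM : ∀ x, |φ x| ≤ M)
    (hφδ : ∀ x y, dist x y ≤ ε → |φ x - φ y| ≤ δ) {E F : Finset X}
    (hE : rSep f w (2 * ε) (2 * r) E) (hF : rSpan f w ε r F) :
    ∑ x ∈ E, Real.exp (Sw f φ w x) ≤
      Real.exp (w.length * δ + 2 * w.length * r * M) * ∑ y ∈ F, Real.exp (Sw f φ w y) := by
  classical
  choose g hgF hgA using hF
  have hinj : Set.InjOn g E := fun x hx x' hx' hg =>
    eq_of_rSep_of_card_dist_lt hE hx hx' (hgA x) (hg ▸ hgA x')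
  calc ∑ x ∈ E, Real.exp (Sw f φ w x)
      ≤ ∑ x ∈ E, Real.exp (w.length * δ + 2 * w.length * r * M) * Real.exp (Sw f φ w (g x)) :=
        sum_le_sum fun x _ => by
          rw [← Real.exp_add, Real.exp_le_exp]
          linarith [Sw_le_Sw_add hε hφM hφδ (hgA x)]
    _ = Real.exp (w.length * δ + 2 * w.length * r * M) *
          ∑ y ∈ E.image g, Real.exp (Sw f φ w y) := by
        rw [sum_image hinj, mul_sum]
    _ ≤ Real.exp (w.length * δ + 2 * w.length * r * M) * ∑ y ∈ F, Real.exp (Sw f φ w y) := by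
        gcongr
        exact image_subset_iff.2 fun x _ => hgF x

theorem Qws_le_exp_mul_Qw [CompactSpace X] (hf : ∀ i, Continuous (f i)) (hw : w ≠ [])
    (hε : 0 < ε) (hr : 0 < r) (hφM : ∀ x, |φ x| ≤ M)
    (hφδ : ∀ x y, dist x y ≤ ε → |φ x - φ y| ≤ δ) :
    Qws f φ w (2 * ε) (2 * r) ≤
      Real.exp (w.length * δ + 2 * w.length * r * M) * Qw f φ w ε r := by
  obtain ⟨F, hF⟩ := exists_rSpan hf hw hε hr
  refine Real.sSup_le_mul_sInf (Real.exp_pos _) ⟨_, F, hF, rfl⟩ ?_ ?_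
  · rintro _ ⟨F, -, rfl⟩
    exact sum_nonneg fun _ _ => (Real.exp_pos _).le
  · rintro _ ⟨E, hE, rfl⟩ _ ⟨F, hF, rfl⟩
    exact sum_exp_Sw_le_of_rSep_of_rSpan hε.le hφM hφδ hE hF

end FreeSemigroupAction

theorem Qns_le_exp_mul_Qn_general
    {X : Type*} [MetricSpace X] [CompactSpace X] {m : ℕ}
    (f : Fin m → X → X) (hf : ∀ i, Continuous (f i))
    (φ : X → ℝ)
    (ε r M δ : ℝ) (hε : 0 < ε) (hr0 : 0 < r)
    (hM : IsGreatest (Set.range fun x => |φ x|) M)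
    (hδ : δ = sSup {t : ℝ | ∃ x y : X, dist x y ≤ ε ∧ t = |φ x - φ y|}) :
    ∀ n : ℕ, 1 ≤ n →
      Qns f φ n (2 * ε) (2 * r) ≤
        Real.exp (n * δ + 2 * n * r * M) * Qn f φ n ε r := by
  intro n hn
  have hφM : ∀ x, |φ x| ≤ M := fun x => hM.2 ⟨x, rfl⟩
  have hφδ : ∀ x y, dist x y ≤ ε → |φ x - φ y| ≤ δ := fun x y hxy =>
    hδ ▸ abs_sub_le_sSup_of_dist_le hφM hxy
  rw [Qns, Qn, mul_left_comm, mul_sum _ _ (Real.exp _)]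
  gcongr with σ
  have hσ : List.ofFn σ ≠ [] := by simpa using Nat.one_le_iff_ne_zero.1 hn
  simpa using Qws_le_exp_mul_Qw hf hσ hε hr0 hφM hφδ

theorem Qns_le_exp_mul_Qn
    {X : Type*} [MetricSpace X] [CompactSpace X] {m : ℕ}
    (f : Fin m → X → X) (hf : ∀ i, Continuous (f i))
    (φ : X → ℝ) (hφ : Continuous φ)
    (ε r M δ : ℝ) (hε : 0 < ε) (hr0 : 0 < r) (hr2 : r < 1 / 2)
    (hM : IsGreatest (Set.range fun x => |φ x|) M)
    (hδ : δ = sSup {t : ℝ | ∃ x y : X, dist x y ≤ ε ∧ t = |φ x - φ y|}) :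
    ∀ n : ℕ, 1 ≤ n →
      Qns f φ n (2 * ε) (2 * r) ≤
        Real.exp (n * δ + 2 * n * r * M) * Qn f φ n ε r :=
  Qns_le_exp_mul_Qn_general f hf φ ε r M δ hε hr0 hM hδ
end

section
/- Let f_0,...,f_{m-1} be continuous self-maps of a compact metric space, φ,ψ continuous, 0<r<1. Then P^s_r(f_0,...,f_{m-1},φ+ψ) ≤ P^s_r(f_0,...,f_{m-1},φ) + P^s_r(f_0,...,f_{m-1},ψ) + log m. -/
open Filter Topology

/-!
Since `S_w(φ + ψ) = S_w φ + S_w ψ`, every `(w, ε, r)`-separated set `E` satisfies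
`∑_E e^{S_w(φ+ψ)} ≤ (∑_E e^{S_w φ}) (∑_E e^{S_w ψ})`, so `Q^s_w(φ + ψ) ≤ Q^s_w(φ) Q^s_w(ψ)`.
Averaging over the `m^n` words of length `n` turns this into
`Q^s_n(φ + ψ) ≤ m^n Q^s_n(φ) Q^s_n(ψ)`, and taking `(1/n) log` and `limsup` gives the claim.
Compactness makes separated sets uniformly finite, so that all the suprema are finite; continuity
bounds the potentials from below, so that the `limsup`s are not `⊥` and can be added in `EReal`.
-/

open Filter Set

theorem exists_card_le_of_pairwise_le_dist {α Y : Type*} [PseudoMetricSpace Y] [CompactSpace Y]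
    (g : α → Y) {ε : ℝ} (hε : 0 < ε) :
    ∃ C : ℕ, ∀ s : Finset α, (s : Set α).Pairwise (fun x y => ε ≤ dist (g x) (g y)) →
      s.card ≤ C := by
  obtain ⟨t, -, ht, hcover⟩ :=
    finite_cover_balls_of_compact (isCompact_univ (X := Y)) (half_pos hε)
  refine ⟨ht.toFinset.card, fun s hs => ?_⟩
  have hcenter : ∀ y : Y, ∃ c ∈ t, dist y c < ε / 2 := by
    simpa using fun y => hcover (mem_univ y)
  choose c hct hc using hcenter
  refine Finset.card_le_card_of_injOn (c ∘ g) (fun x _ => ht.mem_toFinset.2 (hct _)) ?_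
  intro x hx y hy hxy
  by_contra hne
  have hcxy : c (g x) = c (g y) := hxy
  have hx_near : dist (g x) (c (g y)) < ε / 2 := hcxy ▸ hc (g x)
  linarith [hs hx hy hne, hc (g y), dist_triangle_right (g x) (g y) (c (g y))]

theorem EReal.limsup_coe_le_limsup_add_limsup_add {α : Type*} {l : Filter α} [l.NeBot]
    {u v w : α → ℝ} {a b c : ℝ} (hv : ∀ᶠ n in l, a ≤ v n) (hw : ∀ᶠ n in l, b ≤ w n)
    (h : ∀ᶠ n in l, u n ≤ v n + w n + c) :
    limsup (fun n => (u n : EReal)) l ≤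
      limsup (fun n => (v n : EReal)) l + limsup (fun n => (w n : EReal)) l + c := by
  have hne_bot : ∀ {z : α → ℝ} {d : ℝ}, (∀ᶠ n in l, d ≤ z n) →
      limsup (fun n => (z n : EReal)) l ≠ ⊥ := fun hz =>
    ne_bot_of_le_ne_bot (EReal.coe_ne_bot _) <| (limsup_const _).symm.le.trans <|
      limsup_le_limsup (hz.mono fun n hn => EReal.coe_le_coe_iff.2 hn)
  set V : α → EReal := fun n => v n
  set W : α → EReal := fun n => w n
  have hc : limsup (fun _ => (c : EReal)) l = c := limsup_const _
  calc limsup (fun n => (u n : EReal)) l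
      ≤ limsup ((V + W) + fun _ => (c : EReal)) l :=
        limsup_le_limsup (h.mono fun n hn => by simp only [V, W, Pi.add_apply]; exact_mod_cast hn)
    _ ≤ limsup (V + W) l + c := by
        simpa only [hc] using EReal.limsup_add_le (f := l) (u := V + W) (v := fun _ => (c : EReal))
          (Or.inr (by rw [hc]; exact EReal.coe_ne_top c))
          (Or.inr (by rw [hc]; exact EReal.coe_ne_bot c))
    _ ≤ limsup V l + limsup W l + c := by
        gcongr
        exact EReal.limsup_add_le (Or.inl (hne_bot hv)) (Or.inr (hne_bot hw))

theorem Finset.sum_mul_le_sum_mul_sum {α R : Type*} [Semiring R] [PartialOrder R]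
    [IsOrderedRing R] (s : Finset α) {a b : α → R} (ha : ∀ i ∈ s, 0 ≤ a i)
    (hb : ∀ i ∈ s, 0 ≤ b i) : ∑ i ∈ s, a i * b i ≤ (∑ i ∈ s, a i) * ∑ i ∈ s, b i := by
  rw [Finset.sum_mul]
  exact Finset.sum_le_sum fun i hi =>
    mul_le_mul_of_nonneg_left (Finset.single_le_sum hb hi) (ha i hi)

section FreeSemigroupAction

variable {X ι : Type*} (f : ι → X → X)

theorem Sw_add (φ ψ : X → ℝ) (w : List ι) (x : X) :
    Sw f (fun y => φ y + ψ y) w x = Sw f φ w x + Sw f ψ w x :=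
  Finset.sum_add_distrib

theorem Sw_le {φ : X → ℝ} {M : ℝ} (hM : ∀ x, φ x ≤ M) (w : List ι) (x : X) :
    Sw f φ w x ≤ w.length * M := by
  simpa [Sw] using Finset.sum_le_card_nsmul (Finset.range w.length) _ M fun i _ =>
    hM (fw f (w.take i) x)

theorem le_Sw {φ : X → ℝ} {a : ℝ} (ha : ∀ x, a ≤ φ x) (w : List ι) (x : X) :
    w.length * a ≤ Sw f φ w x := by
  simpa [Sw] using Finset.card_nsmul_le_sum (Finset.range w.length) _ a fun i _ =>
    ha (fw f (w.take i) x)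

variable [MetricSpace X] {w : List ι} {ε r : ℝ}

theorem rSep_empty : rSep f w ε r ∅ := by
  simp [rSep]

theorem rSep_singleton (x : X) : rSep f w ε r {x} := by
  simp +contextual [rSep]

theorem rSep.pairwise_le_dist {E : Finset X} (hE : rSep f w ε r E) (hr : 0 ≤ r) :
    (E : Set X).Pairwise fun x y =>
      ε ≤ dist (fun i : Fin w.length => fw f (w.take i) x) (fun i => fw f (w.take i) y) := by
  intro x hx y hy hne
  have hpos : 0 < ((Finset.range w.length).filter
      (fun i => ε ≤ dist (fw f (w.take i) x) (fw f (w.take i) y))).card := by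
    exact_mod_cast (mul_nonneg hr w.length.cast_nonneg).trans_lt (hE x hx y hy hne)
  obtain ⟨i, hi⟩ := Finset.card_pos.mp hpos
  rw [Finset.mem_filter, Finset.mem_range] at hi
  exact hi.2.trans (dist_le_pi_dist (fun i : Fin w.length => fw f (w.take i) x)
    (fun i => fw f (w.take i) y) ⟨i, hi.1⟩)

theorem Ps_eq_zero_of_Qns_eq_zero [Fintype ι] {φ : X → ℝ}
    (h : ∀ n ε, n ≠ 0 → Qns f φ n ε r = 0) : Ps f φ r = 0 := by
  have hterm : ∀ ε (n : ℕ), (n : ℝ)⁻¹ * Real.log (Qns f φ n ε r) = 0 := fun ε n => by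
    rcases eq_or_ne n 0 with rfl | hn
    · simp
    · simp [h n ε hn]
  simp only [Ps, Pse, hterm, EReal.coe_zero, limsup_const]
  exact biSup_const nonempty_Ioi

theorem Qns_eq_zero_of_isEmpty [Fintype ι] [IsEmpty X] (φ : X → ℝ) (n : ℕ) :
    Qns f φ n ε r = 0 := by
  have hQws : ∀ w : List ι, Qws f φ w ε r = 0 := fun w => by
    have hsums : {s : ℝ | ∃ E : Finset X, rSep f w ε r E ∧
        s = ∑ x ∈ E, Real.exp (Sw f φ w x)} = {0} := by
      ext s
      simp only [Finset.eq_empty_of_isEmpty, Finset.sum_empty, mem_singleton_iff]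
      exact ⟨fun ⟨_, _, hs⟩ => hs, fun hs => ⟨∅, rSep_empty f, hs⟩⟩
    rw [Qws, hsums, csSup_singleton]
  simp [Qns, hQws]

theorem Qns_eq_zero_of_isEmpty_index [Fintype ι] [IsEmpty ι] (φ : X → ℝ) {n : ℕ} (hn : n ≠ 0) :
    Qns f φ n ε r = 0 := by
  simp [Qns, zero_pow hn]

variable [CompactSpace X] {φ ψ : X → ℝ}

theorem bddAbove_rSep_sums (hε : 0 < ε) (hr : 0 ≤ r) (hφ : BddAbove (range φ)) :
    BddAbove {s : ℝ | ∃ E : Finset X, rSep f w ε r E ∧ s = ∑ x ∈ E, Real.exp (Sw f φ w x)} := by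
  obtain ⟨M, hM⟩ := hφ
  obtain ⟨C, hC⟩ := exists_card_le_of_pairwise_le_dist (Y := Fin w.length → X)
    (fun x i => fw f (w.take i) x) hε
  refine ⟨C * Real.exp (w.length * M), ?_⟩
  rintro s ⟨E, hE, rfl⟩
  calc ∑ x ∈ E, Real.exp (Sw f φ w x) ≤ E.card * Real.exp (w.length * M) := by
        simpa using Finset.sum_le_card_nsmul _ _ _ fun x _ =>
          Real.exp_le_exp.2 (Sw_le f (fun x => hM (mem_range_self x)) w x)
    _ ≤ C * Real.exp (w.length * M) := by
        gcongr
        exact_mod_cast hC E (hE.pairwise_le_dist f hr)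

theorem sum_exp_Sw_le_Qws (hε : 0 < ε) (hr : 0 ≤ r) (hφ : BddAbove (range φ)) {E : Finset X}
    (hE : rSep f w ε r E) : ∑ x ∈ E, Real.exp (Sw f φ w x) ≤ Qws f φ w ε r :=
  le_csSup (bddAbove_rSep_sums f hε hr hφ) ⟨E, hE, rfl⟩

theorem Qws_nonneg (hε : 0 < ε) (hr : 0 ≤ r) (hφ : BddAbove (range φ)) :
    0 ≤ Qws f φ w ε r := by
  simpa using sum_exp_Sw_le_Qws f hε hr hφ (rSep_empty f)

theorem exp_Sw_le_Qws (hε : 0 < ε) (hr : 0 ≤ r) (hφ : BddAbove (range φ)) (x : X) :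
    Real.exp (Sw f φ w x) ≤ Qws f φ w ε r := by
  simpa using sum_exp_Sw_le_Qws f hε hr hφ (rSep_singleton f x)

theorem Qws_add_le (hε : 0 < ε) (hr : 0 ≤ r) (hφ : BddAbove (range φ))
    (hψ : BddAbove (range ψ)) :
    Qws f (fun x => φ x + ψ x) w ε r ≤ Qws f φ w ε r * Qws f ψ w ε r := by
  refine csSup_le ⟨_, ∅, rSep_empty f, rfl⟩ ?_
  rintro s ⟨E, hE, rfl⟩
  calc ∑ x ∈ E, Real.exp (Sw f (fun x => φ x + ψ x) w x)
      = ∑ x ∈ E, Real.exp (Sw f φ w x) * Real.exp (Sw f ψ w x) := by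
        simp only [Sw_add, Real.exp_add]
    _ ≤ (∑ x ∈ E, Real.exp (Sw f φ w x)) * ∑ x ∈ E, Real.exp (Sw f ψ w x) :=
        Finset.sum_mul_le_sum_mul_sum E (fun x _ => (Real.exp_pos _).le)
          (fun x _ => (Real.exp_pos _).le)
    _ ≤ Qws f φ w ε r * Qws f ψ w ε r :=
        mul_le_mul (sum_exp_Sw_le_Qws f hε hr hφ hE) (sum_exp_Sw_le_Qws f hε hr hψ hE)
          (Finset.sum_nonneg fun x _ => (Real.exp_pos _).le) (Qws_nonneg f hε hr hφ)

variable [Fintype ι] {n : ℕ}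

theorem Qns_add_le (hε : 0 < ε) (hr : 0 ≤ r) (hφ : BddAbove (range φ))
    (hψ : BddAbove (range ψ)) :
    Qns f (fun x => φ x + ψ x) n ε r ≤
      (Fintype.card ι : ℝ) ^ n * (Qns f φ n ε r * Qns f ψ n ε r) := by
  set c : ℝ := (Fintype.card ι : ℝ) ^ n
  have hsum : ∑ σ : Fin n → ι, Qws f (fun x => φ x + ψ x) (List.ofFn σ) ε r ≤
      (∑ σ : Fin n → ι, Qws f φ (List.ofFn σ) ε r) *
        ∑ σ : Fin n → ι, Qws f ψ (List.ofFn σ) ε r :=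
    calc _ ≤ ∑ σ : Fin n → ι, Qws f φ (List.ofFn σ) ε r * Qws f ψ (List.ofFn σ) ε r :=
          Finset.sum_le_sum fun σ _ => Qws_add_le f hε hr hφ hψ
      _ ≤ _ := Finset.sum_mul_le_sum_mul_sum _ (fun σ _ => Qws_nonneg f hε hr hφ)
          (fun σ _ => Qws_nonneg f hε hr hψ)
  calc Qns f (fun x => φ x + ψ x) n ε r
      ≤ c⁻¹ * ((∑ σ : Fin n → ι, Qws f φ (List.ofFn σ) ε r) *
          ∑ σ : Fin n → ι, Qws f ψ (List.ofFn σ) ε r) := by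
        rw [Qns, one_div]
        gcongr
    _ = c * (Qns f φ n ε r * Qns f ψ n ε r) := by
        -- `c * c⁻¹ * c⁻¹ = c⁻¹` holds also for `c = 0`, so `ι` may be empty
        have hc : c * c⁻¹ * c⁻¹ = c⁻¹ := by simpa using inv_mul_mul_self c⁻¹
        simp only [Qns, one_div]
        linear_combination -((∑ σ : Fin n → ι, Qws f φ (List.ofFn σ) ε r) *
          ∑ σ : Fin n → ι, Qws f ψ (List.ofFn σ) ε r) * hc

theorem exp_mul_le_Qns [Nonempty ι] (hε : 0 < ε) (hr : 0 ≤ r) (hφ : BddAbove (range φ)) {a : ℝ}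
    (ha : ∀ x, a ≤ φ x) (x₀ : X) : Real.exp (n * a) ≤ Qns f φ n ε r := by
  have hc : (Fintype.card ι : ℝ) ^ n ≠ 0 :=
    pow_ne_zero _ (Nat.cast_ne_zero.2 Fintype.card_ne_zero)
  have hsum : (Fintype.card ι : ℝ) ^ n * Real.exp (n * a) ≤
      ∑ σ : Fin n → ι, Qws f φ (List.ofFn σ) ε r := by
    simpa using Finset.card_nsmul_le_sum (Finset.univ : Finset (Fin n → ι)) _ _ fun σ _ =>
      (Real.exp_le_exp.2 (by simpa using le_Sw f ha (List.ofFn σ) x₀)).trans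
        (exp_Sw_le_Qws f hε hr hφ x₀)
  calc Real.exp (n * a) = 1 / (Fintype.card ι : ℝ) ^ n *
        ((Fintype.card ι : ℝ) ^ n * Real.exp (n * a)) := by field_simp
    _ ≤ Qns f φ n ε r := by
        rw [Qns]
        gcongr

theorem inv_mul_log_Qns_add_le [Nonempty X] [Nonempty ι] (hε : 0 < ε) (hr : 0 ≤ r)
    (hφ : Continuous φ) (hψ : Continuous ψ) (hn : n ≠ 0) :
    (n : ℝ)⁻¹ * Real.log (Qns f (fun x => φ x + ψ x) n ε r) ≤
      (n : ℝ)⁻¹ * Real.log (Qns f φ n ε r) + (n : ℝ)⁻¹ * Real.log (Qns f ψ n ε r) +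
        Real.log (Fintype.card ι) := by
  obtain ⟨x₀⟩ := ‹Nonempty X›
  have hQns_pos : ∀ χ : X → ℝ, Continuous χ → 0 < Qns f χ n ε r := fun χ hχ =>
    have ⟨a, ha⟩ := (isCompact_range hχ).bddBelow
    (Real.exp_pos _).trans_le <| exp_mul_le_Qns f hε hr (isCompact_range hχ).bddAbove
      (a := a) (fun x => ha (mem_range_self x)) x₀
  have hlog := Real.log_le_log (hQns_pos (fun x => φ x + ψ x) (hφ.add hψ))
    (Qns_add_le f hε hr (isCompact_range hφ).bddAbove (isCompact_range hψ).bddAbove (n := n))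
  rw [Real.log_mul (by positivity) (mul_pos (hQns_pos φ hφ) (hQns_pos ψ hψ)).ne',
    Real.log_mul (hQns_pos φ hφ).ne' (hQns_pos ψ hψ).ne', Real.log_pow] at hlog
  have hn' : (0 : ℝ) < n := by positivity
  calc (n : ℝ)⁻¹ * Real.log (Qns f (fun x => φ x + ψ x) n ε r)
      ≤ (n : ℝ)⁻¹ * (n * Real.log (Fintype.card ι) +
          (Real.log (Qns f φ n ε r) + Real.log (Qns f ψ n ε r))) := by gcongr
    _ = _ := by field_simp; ring

theorem le_inv_mul_log_Qns [Nonempty X] [Nonempty ι] (hε : 0 < ε) (hr : 0 ≤ r)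
    (hφ : BddAbove (range φ)) {a : ℝ} (ha : ∀ x, a ≤ φ x) (hn : n ≠ 0) :
    a ≤ (n : ℝ)⁻¹ * Real.log (Qns f φ n ε r) := by
  obtain ⟨x₀⟩ := ‹Nonempty X›
  have hexp := exp_mul_le_Qns f hε hr hφ ha x₀ (n := n)
  rw [le_inv_mul_iff₀ (by positivity)]
  exact (Real.le_log_iff_exp_le ((Real.exp_pos _).trans_le hexp)).2 hexp

theorem Pse_add_le [Nonempty X] [Nonempty ι] (hε : 0 < ε) (hr : 0 ≤ r) (hφ : Continuous φ)
    (hψ : Continuous ψ) :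
    Pse f (fun x => φ x + ψ x) ε r ≤
      Pse f φ ε r + Pse f ψ ε r + (Real.log (Fintype.card ι) : EReal) := by
  obtain ⟨a, ha⟩ := (isCompact_range hφ).bddBelow
  obtain ⟨b, hb⟩ := (isCompact_range hψ).bddBelow
  have hn : ∀ᶠ n : ℕ in atTop, n ≠ 0 := eventually_ne_atTop 0
  exact EReal.limsup_coe_le_limsup_add_limsup_add
    (hn.mono fun n => le_inv_mul_log_Qns f hε hr (isCompact_range hφ).bddAbove
      (a := a) fun x => ha (mem_range_self x))
    (hn.mono fun n => le_inv_mul_log_Qns f hε hr (isCompact_range hψ).bddAbove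
      (a := b) fun x => hb (mem_range_self x))
    (hn.mono fun n => inv_mul_log_Qns_add_le f hε hr hφ hψ)

end FreeSemigroupAction

theorem Ps_add_potentials_general
    {X : Type*} [MetricSpace X] [CompactSpace X] {m : ℕ}
    (f : Fin m → X → X)
    (φ ψ : X → ℝ) (hφ : Continuous φ) (hψ : Continuous ψ)
    (r : ℝ) (hr0 : 0 < r) :
    Ps f (fun x => φ x + ψ x) r ≤
      Ps f φ r + Ps f ψ r + ((Real.log m : ℝ) : EReal) := by
  have hlog : (0 : EReal) ≤ (Real.log m : EReal) :=
    EReal.coe_nonneg.2 (Real.log_natCast_nonneg m)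
  rcases isEmpty_or_nonempty X with hX | hX
  · have hPs (g : X → ℝ) : Ps f g r = 0 :=
      Ps_eq_zero_of_Qns_eq_zero f fun n _ _ => Qns_eq_zero_of_isEmpty f g n
    simpa [hPs] using hlog
  rcases isEmpty_or_nonempty (Fin m) with hm | hm
  · have hPs (g : X → ℝ) : Ps f g r = 0 :=
      Ps_eq_zero_of_Qns_eq_zero f fun _ _ hn => Qns_eq_zero_of_isEmpty_index f g hn
    simpa [hPs] using hlog
  refine iSup₂_le fun ε hε => (Pse_add_le f hε hr0.le hφ hψ).trans ?_
  rw [Fintype.card_fin]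
  gcongr
  · exact le_iSup₂ (f := fun ε (_ : ε ∈ Ioi (0 : ℝ)) => Pse f φ ε r) ε hε
  · exact le_iSup₂ (f := fun ε (_ : ε ∈ Ioi (0 : ℝ)) => Pse f ψ ε r) ε hε

theorem Ps_add_potentials
    {X : Type*} [MetricSpace X] [CompactSpace X] {m : ℕ}
    (f : Fin m → X → X) (hf : ∀ i, Continuous (f i))
    (φ ψ : X → ℝ) (hφ : Continuous φ) (hψ : Continuous ψ)
    (r : ℝ) (hr0 : 0 < r) (hr1 : r < 1) :
    Ps f (fun x => φ x + ψ x) r ≤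
      Ps f φ r + Ps f ψ r + ((Real.log m : ℝ) : EReal) :=
  Ps_add_potentials_general f φ ψ hφ hψ r hr0
end
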